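/- arXiv:2111.00274 — 5 statements merged into one kernel-verified Lean document; each statement's English description precedes it below -/
import Mathlib

section
/- Let E be a real Banach space and A : E →L[ℝ] E a bounded linear operator such that there exist constants C ≥ 1 and w ≥ 0 with ‖exp(tA)‖ ≤ C·e^{wt} for all t ≥ 0. Then for every real λ > w, the operator λ·id − A is invertible (i.e. λ lies in the resolvent set of A), its inverse R(λ,A) satisfies R(λ,A) f = ∫₀^∞ e^{−λt} (exp(tA)) f dt for every f ∈ E, and the operator norm satisfies ‖R(λ,A)‖ ≤ C/(λ − w). -/
/-!
The resolvent is the Laplace transform of the semigroup: put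
`g t = e^{-λt} exp(tA)`. Then `g' = -(λ - A) g` and, since `‖g t‖ ≤ C e^{-(λ-w)t}`, `g` is
integrable on `(0, ∞)` and tends to `0` at infinity. Integrating `g'` gives
`(λ - A) ∫₀^∞ g = g 0 = 1`, and `g` commutes with `λ - A`, so `∫₀^∞ g` is a two-sided inverse;
integrating the bound on `‖g‖` gives `‖∫₀^∞ g‖ ≤ C / (λ - w)`.
-/

open MeasureTheory NormedSpace Set Filter Topology

section ExpDecay

variable {F : Type*} [NormedAddCommGroup F] {g : ℝ → F} {C b : ℝ}

lemma integrableOn_Ioi_of_norm_le_exp (hg : Continuous g) (hb : 0 < b)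
    (hbound : ∀ t, 0 ≤ t → ‖g t‖ ≤ C * Real.exp (-b * t)) : IntegrableOn g (Ioi 0) :=
  ((exp_neg_integrableOn_Ioi 0 hb).const_mul C).mono' hg.aestronglyMeasurable.restrict <|
    (ae_restrict_iff' measurableSet_Ioi).2 <| .of_forall fun t ht => hbound t (le_of_lt ht)

lemma norm_setIntegral_Ioi_le_of_norm_le_exp [NormedSpace ℝ F] (hg : Continuous g) (hb : 0 < b)
    (hbound : ∀ t, 0 ≤ t → ‖g t‖ ≤ C * Real.exp (-b * t)) :
    ‖∫ t in Ioi 0, g t‖ ≤ C / b :=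
  calc ‖∫ t in Ioi 0, g t‖ ≤ ∫ t in Ioi 0, ‖g t‖ := norm_integral_le_integral_norm g
    _ ≤ ∫ t in Ioi 0, C * Real.exp (-b * t) :=
        setIntegral_mono_on (integrableOn_Ioi_of_norm_le_exp hg hb hbound).norm
          ((exp_neg_integrableOn_Ioi 0 hb).const_mul C) measurableSet_Ioi
          fun t ht => hbound t (le_of_lt ht)
    _ = C / b := by
        rw [integral_const_mul, integral_exp_mul_Ioi (neg_lt_zero.2 hb)]
        simp [div_eq_mul_inv]

lemma tendsto_zero_of_norm_le_exp (hb : 0 < b)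
    (hbound : ∀ t, 0 ≤ t → ‖g t‖ ≤ C * Real.exp (-b * t)) : Tendsto g atTop (𝓝 0) := by
  refine squeeze_zero_norm' ((eventually_ge_atTop 0).mono hbound) ?_
  simpa using (Real.tendsto_exp_atBot.comp
    (tendsto_id.const_mul_atTop_of_neg (neg_lt_zero.2 hb))).const_mul C

end ExpDecay

section DampedExp

variable {𝔸 : Type*} [NormedRing 𝔸] [NormedAlgebra ℝ 𝔸] (a : 𝔸) (l : ℝ)

noncomputable def dampedExp (t : ℝ) : 𝔸 := Real.exp (-(l * t)) • exp (t • a)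

lemma dampedExp_zero : dampedExp a l 0 = 1 := by simp [dampedExp]

lemma commute_dampedExp (t : ℝ) : Commute (dampedExp a l t) (l • 1 - a) :=
  ((Commute.one_right _).smul_right l).sub_right
    (((Commute.refl a).smul_left t).exp_left.smul_left _)

lemma norm_dampedExp_le {C w : ℝ} (hbound : ∀ t : ℝ, 0 ≤ t → ‖exp (t • a)‖ ≤ C * Real.exp (w * t))
    {t : ℝ} (ht : 0 ≤ t) : ‖dampedExp a l t‖ ≤ C * Real.exp (-(l - w) * t) :=
  calc ‖dampedExp a l t‖ = Real.exp (-(l * t)) * ‖exp (t • a)‖ := by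
        rw [dampedExp, norm_smul, Real.norm_eq_abs, Real.abs_exp]
    _ ≤ Real.exp (-(l * t)) * (C * Real.exp (w * t)) := by gcongr; exact hbound t ht
    _ = C * Real.exp (-(l - w) * t) := by
        rw [show -(l - w) * t = w * t + -(l * t) by ring, Real.exp_add]; ring

variable [CompleteSpace 𝔸]

lemma continuous_dampedExp : Continuous (dampedExp a l) :=
  (Real.continuous_exp.comp (continuous_const.mul continuous_id).neg).smul
    (differentiable_exp_smul_const ℝ a).continuous

lemma hasDerivAt_dampedExp (t : ℝ) :
    HasDerivAt (dampedExp a l) (-((l • 1 - a) * dampedExp a l t)) t := by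
  have hdamp : HasDerivAt (fun t => Real.exp (-(l * t))) (Real.exp (-(l * t)) * -l) t := by
    simpa using ((hasDerivAt_id t).const_mul l).neg.exp
  refine (hdamp.smul (hasDerivAt_exp_smul_const' a t)).congr_deriv ?_
  simp only [dampedExp, sub_mul, smul_mul_assoc, one_mul, mul_smul_comm]
  module

variable {a l}

lemma mul_integral_dampedExp (hint : IntegrableOn (dampedExp a l) (Ioi 0))
    (htend : Tendsto (dampedExp a l) atTop (𝓝 0)) :
    (l • 1 - a) * ∫ t in Ioi 0, dampedExp a l t = 1 := by
  have hderiv_int : IntegrableOn (fun t => -((l • 1 - a) * dampedExp a l t)) (Ioi 0) :=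
    ((ContinuousLinearMap.mul ℝ 𝔸 (l • 1 - a)).integrable_comp hint).neg
  have hFTC := integral_Ioi_of_hasDerivAt_of_tendsto'
    (fun t _ => hasDerivAt_dampedExp a l t) hderiv_int htend
  rw [integral_neg, dampedExp_zero, zero_sub, neg_inj] at hFTC
  rwa [← integral_const_mul_of_integrable hint]

lemma integral_dampedExp_mul (hint : IntegrableOn (dampedExp a l) (Ioi 0))
    (htend : Tendsto (dampedExp a l) atTop (𝓝 0)) :
    (∫ t in Ioi 0, dampedExp a l t) * (l • 1 - a) = 1 := by
  calc (∫ t in Ioi 0, dampedExp a l t) * (l • 1 - a)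
      = ∫ t in Ioi 0, (l • 1 - a) * dampedExp a l t := by
        rw [← integral_mul_const_of_integrable hint]
        exact integral_congr_ae (.of_forall fun t => commute_dampedExp a l t)
    _ = 1 := by rw [integral_const_mul_of_integrable hint, mul_integral_dampedExp hint htend]

end DampedExp

theorem stmt_0_general {E : Type*} [NormedAddCommGroup E] [NormedSpace ℝ E] [CompleteSpace E]
    (A : E →L[ℝ] E) (C w : ℝ)
    (hbound : ∀ t : ℝ, 0 ≤ t → ‖exp (t • A)‖ ≤ C * Real.exp (w * t))
    (l : ℝ) (hl : w < l) :
    ∃ R : E →L[ℝ] E,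
      (l • (1 : E →L[ℝ] E) - A) * R = 1 ∧
      R * (l • (1 : E →L[ℝ] E) - A) = 1 ∧
      (∀ f : E, R f = ∫ t in Set.Ioi (0 : ℝ), Real.exp (-(l * t)) • (exp (t • A)) f) ∧
      ‖R‖ ≤ C / (l - w) := by
  have hgap : 0 < l - w := sub_pos.2 hl
  have hdecay t (ht : 0 ≤ t) := norm_dampedExp_le A l hbound ht
  have hint := integrableOn_Ioi_of_norm_le_exp (continuous_dampedExp A l) hgap hdecay
  have htend := tendsto_zero_of_norm_le_exp hgap hdecay
  refine ⟨∫ t in Ioi 0, dampedExp A l t, mul_integral_dampedExp hint htend,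
    integral_dampedExp_mul hint htend, fun f => ?_,
    norm_setIntegral_Ioi_le_of_norm_le_exp (continuous_dampedExp A l) hgap hdecay⟩
  rw [ContinuousLinearMap.integral_apply hint]
  rfl

/-- For a bounded operator `A` on a real Banach space `E` whose semigroup `exp (t • A)`
satisfies the growth bound `‖exp (t • A)‖ ≤ C * e^(w t)`, every real `λ > w` lies in the
resolvent set of `A`: `λ • id - A` is invertible, the inverse (resolvent) is given by the
Laplace transform of the semigroup, and its norm is at most `C / (λ - w)`. -/
theorem stmt_0 {E : Type*} [NormedAddCommGroup E] [NormedSpace ℝ E] [CompleteSpace E]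
    (A : E →L[ℝ] E) (C w : ℝ) (hC : 1 ≤ C) (hw : 0 ≤ w)
    (hbound : ∀ t : ℝ, 0 ≤ t → ‖exp (t • A)‖ ≤ C * Real.exp (w * t))
    (l : ℝ) (hl : w < l) :
    ∃ R : E →L[ℝ] E,
      (l • (1 : E →L[ℝ] E) - A) * R = 1 ∧
      R * (l • (1 : E →L[ℝ] E) - A) = 1 ∧
      (∀ f : E, R f = ∫ t in Set.Ioi (0 : ℝ), Real.exp (-(l * t)) • (exp (t • A)) f) ∧
      ‖R‖ ≤ C / (l - w) :=
  stmt_0_general A C w hbound l hl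
end

section
/- Let E be a real Banach space and A : E →L[ℝ] E a bounded linear operator with ‖exp(tA)‖ ≤ C·e^{wt} for all t ≥ 0, where C ≥ 1 and w ≥ 0. Then for every t > 0, every real λ > w and every f ∈ E, one has the identity ∑_{n=1}^∞ (−1)^{n−1} (e^{nλt}/n!) R(nλ,A)(A f) = λ·∑_{n=1}^∞ (−1)^{n−1} (e^{nλt}/(n−1)!) R(nλ,A) f + (exp(−e^{λt}) − 1)·f, both series converging in E. -/
/-!
Write `x = e^{λt}` and `μₙ = (n+1)λ`. The resolvent relation `R(μ)(A f) = μ R(μ) f - f`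
splits the `n`-th term on the left into `λ` times the `n`-th term on the right minus
`(-1)^n x^{n+1}/(n+1)! • f`, and these scalar coefficients sum to `1 - exp(-x)`. Both series
converge because `‖R(μₙ)‖ ≤ 1` once `μₙ ≥ ‖A‖ + 1`, while `x^n/n!` is summable.
-/

open Filter NormedSpace

open scoped Nat

theorem summable_smul_of_eventually_norm_le {E : Type*} [NormedAddCommGroup E] [NormedSpace ℝ E]
    [CompleteSpace E] {c : ℕ → ℝ} {v : ℕ → E} {M : ℝ}
    (hc : Summable fun n => ‖c n‖) (hv : ∀ᶠ n in atTop, ‖v n‖ ≤ M) :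
    Summable fun n => c n • v n :=
  .of_norm_bounded_eventually_nat (hc.mul_right M) <| hv.mono fun n hn => by
    rw [norm_smul]
    exact mul_le_mul_of_nonneg_left hn (norm_nonneg _)

section Resolvent

variable {E : Type*} [NormedAddCommGroup E] [NormedSpace ℝ E] {A R : E →L[ℝ] E} {μ : ℝ}

theorem apply_map_eq_smul_sub_of_mul_sub_eq_one (h : R * (μ • 1 - A) = 1) (f : E) :
    R (A f) = μ • R f - f := by
  have hf : μ • R f - R (A f) = f := by simpa using congr($h f)
  exact eq_sub_of_add_eq (sub_eq_iff_eq_add'.mp hf).symm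

theorem norm_le_one_of_mul_sub_eq_one (h : R * (μ • 1 - A) = 1) (hμ : ‖A‖ + 1 ≤ μ) :
    ‖R‖ ≤ 1 := by
  have hsmul : μ • R = 1 + R * A := by
    rw [mul_sub, mul_smul_comm, mul_one, sub_eq_iff_eq_add] at h
    exact h
  have hle : μ * ‖R‖ ≤ 1 + ‖R‖ * ‖A‖ :=
    calc μ * ‖R‖ = ‖μ • R‖ := by
          rw [norm_smul, Real.norm_of_nonneg (by linarith [norm_nonneg A])]
      _ ≤ ‖(1 : E →L[ℝ] E)‖ + ‖R * A‖ := hsmul ▸ norm_add_le _ _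
      _ ≤ 1 + ‖R‖ * ‖A‖ := add_le_add ContinuousLinearMap.norm_id_le (norm_mul_le _ _)
  nlinarith [norm_nonneg R]

theorem eventually_norm_le_one_of_mul_sub_eq_one {R : ℝ → E →L[ℝ] E} {μ : ℕ → ℝ}
    (hμ : Tendsto μ atTop atTop) (h : ∀ n, R (μ n) * (μ n • 1 - A) = 1) :
    ∀ᶠ n in atTop, ‖R (μ n)‖ ≤ 1 :=
  (hμ.eventually_ge_atTop (‖A‖ + 1)).mono fun n hn => norm_le_one_of_mul_sub_eq_one (h n) hn

theorem neg_one_pow_smul_div_factorial_succ_smul_apply_map {R : E →L[ℝ] E} {l : ℝ} {n : ℕ}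
    (h : R * ((((n : ℝ) + 1) * l) • 1 - A) = 1) (a : ℝ) (f : E) :
    (-1 : ℝ) ^ n • (a / (n + 1)!) • R (A f) =
      l • ((-1 : ℝ) ^ n • (a / n !) • R f) - ((-1) ^ n * (a / (n + 1)!)) • f := by
  rw [apply_map_eq_smul_sub_of_mul_sub_eq_one h, smul_sub, smul_sub]
  simp only [smul_smul]
  congr 2
  rw [Nat.factorial_succ]
  push_cast
  field_simp

theorem summable_pow_div_factorial_smul_apply [CompleteSpace E] {R : ℝ → E →L[ℝ] E}
    {μ : ℕ → ℝ} (hμ : Tendsto μ atTop atTop) (h : ∀ n, R (μ n) * (μ n • 1 - A) = 1)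
    (x : ℝ) (f : E) :
    Summable fun n : ℕ => (x ^ n / n !) • R (μ n) f := by
  refine summable_smul_of_eventually_norm_le (M := ‖f‖) ?_
    ((eventually_norm_le_one_of_mul_sub_eq_one hμ h).mono fun n hn => ?_)
  · simpa [norm_div, norm_pow] using Real.summable_pow_div_factorial ‖x‖
  · simpa using (R _).le_of_opNorm_le hn f

end Resolvent

theorem hasSum_neg_one_pow_mul_pow_succ_div_factorial_succ (x : ℝ) :
    HasSum (fun n : ℕ => (-1) ^ n * (x ^ (n + 1) / (n + 1)!)) (1 - Real.exp (-x)) := by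
  have h := ((hasSum_nat_add_iff' 1).mpr (expSeries_div_hasSum_exp (-x))).neg
  simp only [← Real.exp_eq_exp_ℝ, Finset.range_one, Finset.sum_singleton, pow_zero,
    Nat.factorial_zero, Nat.cast_one, div_one, neg_sub] at h
  refine h.congr_fun fun n => ?_
  rw [neg_pow x, pow_succ (-1 : ℝ)]
  ring

theorem stmt_2_general {E : Type*} [NormedAddCommGroup E] [NormedSpace ℝ E] [CompleteSpace E]
    (A : E →L[ℝ] E) (w : ℝ) (hw : 0 ≤ w)
    (R : ℝ → E →L[ℝ] E)
    (hR : ∀ μ : ℝ, w < μ →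
      (μ • (1 : E →L[ℝ] E) - A) * R μ = 1 ∧ R μ * (μ • (1 : E →L[ℝ] E) - A) = 1)
    (t : ℝ) (l : ℝ) (hl : w < l) (f : E) :
    Summable (fun n : ℕ => ((-1 : ℝ)) ^ n •
      (Real.exp (((n : ℝ) + 1) * l * t) / (Nat.factorial (n + 1) : ℝ)) •
        R (((n : ℝ) + 1) * l) (A f)) ∧
    Summable (fun n : ℕ => ((-1 : ℝ)) ^ n •
      (Real.exp (((n : ℝ) + 1) * l * t) / (Nat.factorial n : ℝ)) •
        R (((n : ℝ) + 1) * l) f) ∧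
    (∑' n : ℕ, ((-1 : ℝ)) ^ n •
        (Real.exp (((n : ℝ) + 1) * l * t) / (Nat.factorial (n + 1) : ℝ)) •
          R (((n : ℝ) + 1) * l) (A f)) =
      l • (∑' n : ℕ, ((-1 : ℝ)) ^ n •
        (Real.exp (((n : ℝ) + 1) * l * t) / (Nat.factorial n : ℝ)) •
          R (((n : ℝ) + 1) * l) f) +
      (Real.exp (-Real.exp (l * t)) - 1) • f := by
  have hl0 : 0 < l := hw.trans_lt hl
  have hw_lt (n : ℕ) : w < ((n : ℝ) + 1) * l :=
    hl.trans_le (le_mul_of_one_le_left hl0.le (by linarith [n.cast_nonneg (α := ℝ)]))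
  have hμ : Tendsto (fun n : ℕ => ((n : ℝ) + 1) * l) atTop atTop :=
    (tendsto_atTop_add_const_right _ 1 tendsto_natCast_atTop_atTop).atTop_mul_const hl0
  set x := Real.exp (l * t)
  have hexp (n : ℕ) : Real.exp (((n : ℝ) + 1) * l * t) = x ^ (n + 1) := by
    rw [mul_assoc, ← Real.exp_nat_mul]
    push_cast
    rfl
  have hsum_f : Summable fun n : ℕ => ((-1 : ℝ)) ^ n •
      (Real.exp (((n : ℝ) + 1) * l * t) / (Nat.factorial n : ℝ)) •
        R (((n : ℝ) + 1) * l) f := by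
    refine ((summable_pow_div_factorial_smul_apply hμ (fun n => (hR _ (hw_lt n)).2) (-x)
      f).const_smul x).congr fun n => ?_
    rw [hexp, smul_smul, smul_smul, neg_pow x, pow_succ]
    congr 1
    ring
  have hasSum_Af : HasSum (fun n : ℕ => ((-1 : ℝ)) ^ n •
      (Real.exp (((n : ℝ) + 1) * l * t) / (Nat.factorial (n + 1) : ℝ)) •
        R (((n : ℝ) + 1) * l) (A f)) (l • _ - (1 - Real.exp (-x)) • f) :=
    ((hsum_f.hasSum.const_smul l).sub
      ((hasSum_neg_one_pow_mul_pow_succ_div_factorial_succ x).smul_const f)).congr_fun fun n => by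
        rw [neg_one_pow_smul_div_factorial_succ_smul_apply_map (hR _ (hw_lt n)).2, hexp]
  refine ⟨hasSum_Af.summable, hsum_f, ?_⟩
  rw [hasSum_Af.tsum_eq, sub_eq_add_neg, ← neg_smul, neg_sub]

/-- The resolvent identity behind the Phragmén approximant: for `t > 0` and `λ > w`,
`∑_{n≥1} (-1)^(n-1) (e^(nλt)/n!) R(nλ)(A f)
  = λ ∑_{n≥1} (-1)^(n-1) (e^(nλt)/(n-1)!) R(nλ) f + (exp(-e^(λt)) - 1) f`,
both series converging in `E`. -/
theorem stmt_2 {E : Type*} [NormedAddCommGroup E] [NormedSpace ℝ E] [CompleteSpace E]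
    (A : E →L[ℝ] E) (C w : ℝ) (hC : 1 ≤ C) (hw : 0 ≤ w)
    (hbound : ∀ t : ℝ, 0 ≤ t → ‖exp (t • A)‖ ≤ C * Real.exp (w * t))
    (R : ℝ → E →L[ℝ] E)
    (hR : ∀ μ : ℝ, w < μ →
      (μ • (1 : E →L[ℝ] E) - A) * R μ = 1 ∧ R μ * (μ • (1 : E →L[ℝ] E) - A) = 1)
    (t : ℝ) (ht : 0 < t) (l : ℝ) (hl : w < l) (f : E) :
    Summable (fun n : ℕ => ((-1 : ℝ)) ^ n •
      (Real.exp (((n : ℝ) + 1) * l * t) / (Nat.factorial (n + 1) : ℝ)) •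
        R (((n : ℝ) + 1) * l) (A f)) ∧
    Summable (fun n : ℕ => ((-1 : ℝ)) ^ n •
      (Real.exp (((n : ℝ) + 1) * l * t) / (Nat.factorial n : ℝ)) •
        R (((n : ℝ) + 1) * l) f) ∧
    (∑' n : ℕ, ((-1 : ℝ)) ^ n •
        (Real.exp (((n : ℝ) + 1) * l * t) / (Nat.factorial (n + 1) : ℝ)) •
          R (((n : ℝ) + 1) * l) (A f)) =
      l • (∑' n : ℕ, ((-1 : ℝ)) ^ n •
        (Real.exp (((n : ℝ) + 1) * l * t) / (Nat.factorial n : ℝ)) •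
          R (((n : ℝ) + 1) * l) f) +
      (Real.exp (-Real.exp (l * t)) - 1) • f :=
  stmt_2_general A w hw R hR t l hl f
end

section
/- Let E be a real Banach space and A : E →L[ℝ] E a bounded linear operator with ‖exp(tA)‖ ≤ C·e^{wt} for all t ≥ 0, where C ≥ 1 and w ≥ 0. Then for every t > 0 and every f ∈ E, the Phragmén approximants converge to the semigroup: λ·∑_{n=1}^∞ (−1)^{n−1} (e^{nλt}/(n−1)!) R(nλ,A) f → exp(tA) f in E as λ → ∞. -/
/-!
The Laplace transform of `s ↦ exp (s • A)` is the resolvent, so the `n`-th Phragmén term is a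
Laplace integral. The substitution `u = e^{λ(t - s)}` turns it into
`((-1)^n / n!) ∫₀^{e^{λt}} u^n exp ((t - log u / λ) • A) f du`, and summing the exponential series
under the integral gives `∫₀^{e^{λt}} e^{-u} exp ((t - log u / λ) • A) f du`. As `λ → ∞` the
integrand tends to `e^{-u} exp (t • A) f` for every `u > 0`, and the growth bound supplies the
majorant `C e^{wt} e^{-u} (u^{-1/2} + u^{1/2})` once `λ ≥ 2|w|`, so dominated convergence gives the
limit `∫₀^∞ e^{-u} du • exp (t • A) f`.
-/

open MeasureTheory NormedSpace Filter Set Topology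
open scoped Nat

noncomputable def laplaceTransform {F : Type*} [NormedAddCommGroup F] [NormedSpace ℝ F]
    (g : ℝ → F) (μ : ℝ) : F :=
  ∫ s in Ioi 0, Real.exp (-(μ * s)) • g s

lemma Real.rpow_le_rpow_add_rpow {u p q r : ℝ} (hu : 0 < u) (hqp : q ≤ p) (hpr : p ≤ r) :
    u ^ p ≤ u ^ q + u ^ r := by
  rcases le_total u 1 with hu1 | hu1
  · linarith [Real.rpow_le_rpow_of_exponent_ge hu hu1 hqp, Real.rpow_nonneg hu.le r]
  · linarith [Real.rpow_le_rpow_of_exponent_le hu1 hpr, Real.rpow_nonneg hu.le q]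

section LaplaceTransform

variable {F : Type*} [NormedAddCommGroup F] [NormedSpace ℝ F] {g : ℝ → F} {C w μ : ℝ}

lemma norm_exp_neg_mul_smul_le (hg : ∀ s, 0 ≤ s → ‖g s‖ ≤ C * Real.exp (w * s)) {s : ℝ}
    (hs : 0 ≤ s) : ‖Real.exp (-(μ * s)) • g s‖ ≤ C * Real.exp (-(μ - w) * s) :=
  calc ‖Real.exp (-(μ * s)) • g s‖ = Real.exp (-(μ * s)) * ‖g s‖ := by
        rw [norm_smul, Real.norm_of_nonneg (Real.exp_pos _).le]
    _ ≤ Real.exp (-(μ * s)) * (C * Real.exp (w * s)) := by gcongr; exact hg s hs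
    _ = C * Real.exp (-(μ - w) * s) := by
        rw [mul_left_comm, ← Real.exp_add]; ring_nf

lemma integrableOn_exp_neg_mul_smul (hg_cont : Continuous g)
    (hg : ∀ s, 0 ≤ s → ‖g s‖ ≤ C * Real.exp (w * s)) (hμ : w < μ) :
    IntegrableOn (fun s => Real.exp (-(μ * s)) • g s) (Ioi 0) := by
  refine ((exp_neg_integrableOn_Ioi 0 (sub_pos.2 hμ)).const_mul C).mono' ?_ ?_
  · exact (by fun_prop : Continuous fun s => Real.exp (-(μ * s)) • g s).aestronglyMeasurable
  · filter_upwards [ae_restrict_mem measurableSet_Ioi] with s hs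
    exact norm_exp_neg_mul_smul_le hg (le_of_lt hs)

lemma tendsto_exp_neg_mul_smul_atTop (hg : ∀ s, 0 ≤ s → ‖g s‖ ≤ C * Real.exp (w * s))
    (hμ : w < μ) : Tendsto (fun s => Real.exp (-(μ * s)) • g s) atTop (𝓝 0) := by
  refine squeeze_zero_norm' ?_ (by simpa using (Real.tendsto_exp_atBot.comp
    (tendsto_id.const_mul_atTop_of_neg (neg_lt_zero.2 (sub_pos.2 hμ)))).const_mul C)
  filter_upwards [eventually_ge_atTop 0] with s hs
  simpa [neg_sub] using norm_exp_neg_mul_smul_le (μ := μ) hg hs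

end LaplaceTransform

lemma laplaceTransform_apply {E F : Type*} [NormedAddCommGroup E] [NormedSpace ℝ E]
    [NormedAddCommGroup F] [NormedSpace ℝ F] {ψ : ℝ → E →L[ℝ] F} {μ : ℝ}
    (hψ : IntegrableOn (fun s => Real.exp (-(μ * s)) • ψ s) (Ioi 0)) (f : E) :
    laplaceTransform ψ μ f = laplaceTransform (fun s => ψ s f) μ := by
  simp only [laplaceTransform, ContinuousLinearMap.integral_apply hψ, smul_apply]

section Resolvent

variable {𝔸 : Type*} [NormedRing 𝔸] [NormedAlgebra ℝ 𝔸] [CompleteSpace 𝔸] {a : 𝔸} {C w μ : ℝ}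

lemma sub_mul_laplaceTransform_exp_smul
    (hbound : ∀ s : ℝ, 0 ≤ s → ‖exp (s • a)‖ ≤ C * Real.exp (w * s)) (hμ : w < μ) :
    (μ • (1 : 𝔸) - a) * laplaceTransform (fun s : ℝ => exp (s • a)) μ = 1 := by
  have hcont : Continuous fun s : ℝ => exp (s • a) := (differentiable_exp_smul_const ℝ a).continuous
  have hint := integrableOn_exp_neg_mul_smul hcont hbound hμ
  have hderiv : ∀ s ∈ Ici (0 : ℝ), HasDerivAt (fun s => Real.exp (-(μ * s)) • exp (s • a))
      (-((μ • (1 : 𝔸) - a) * (Real.exp (-(μ * s)) • exp (s • a)))) s := by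
    intro s _
    have hexp : HasDerivAt (fun s => Real.exp (-(μ * s))) (-μ * Real.exp (-(μ * s))) s := by
      simpa [mul_comm] using ((hasDerivAt_mul_const μ).neg.exp : HasDerivAt _ _ s)
    refine (hexp.smul (hasDerivAt_exp_smul_const' a s)).congr_deriv ?_
    rw [sub_mul, smul_mul_assoc, one_mul, mul_smul_comm]
    module
  have hftc := integral_Ioi_of_hasDerivAt_of_tendsto' hderiv
    ((hint.const_mul (μ • (1 : 𝔸) - a)).neg) (tendsto_exp_neg_mul_smul_atTop hbound hμ)
  rw [integral_neg, integral_const_mul_of_integrable hint] at hftc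
  simpa [laplaceTransform] using hftc

lemma eq_laplaceTransform_exp_smul_of_mul_eq_one
    (hbound : ∀ s : ℝ, 0 ≤ s → ‖exp (s • a)‖ ≤ C * Real.exp (w * s)) (hμ : w < μ) {r : 𝔸}
    (hr : r * (μ • (1 : 𝔸) - a) = 1) : r = laplaceTransform (fun s : ℝ => exp (s • a)) μ := by
  rw [← mul_one r, ← sub_mul_laplaceTransform_exp_smul hbound hμ, ← mul_assoc, hr, one_mul]

end Resolvent

section Phragmen

variable {F : Type*} [NormedAddCommGroup F] {g : ℝ → F} {C w l t : ℝ}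

lemma norm_comp_log_div_le (hg : ∀ s, 0 ≤ s → ‖g s‖ ≤ C * Real.exp (w * s)) (hl : 0 < l)
    {u : ℝ} (hu : u ∈ Ioo 0 (Real.exp (l * t))) :
    ‖g (t - Real.log u / l)‖ ≤ C * Real.exp (w * t) * u ^ (-(w / l)) := by
  have hlog : Real.log u < l * t := by
    simpa using Real.log_lt_log hu.1 hu.2
  refine (hg _ (sub_nonneg.2 ((div_le_iff₀' hl).2 hlog.le))).trans_eq ?_
  rw [Real.rpow_def_of_pos hu.1, mul_assoc, ← Real.exp_add]
  congr 2
  field_simp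
  ring

lemma aestronglyMeasurable_comp_log_div (hg_cont : Continuous g) (l t : ℝ) (μ : Measure ℝ) :
    AEStronglyMeasurable (fun u => g (t - Real.log u / l)) μ :=
  hg_cont.comp_aestronglyMeasurable
    (measurable_const.sub (Real.measurable_log.div_const l)).aestronglyMeasurable

lemma integrableOn_comp_log_div (hg_cont : Continuous g)
    (hg : ∀ s, 0 ≤ s → ‖g s‖ ≤ C * Real.exp (w * s)) (hl : 0 < l) (hwl : w < l) (t : ℝ) :
    IntegrableOn (fun u => g (t - Real.log u / l)) (Ioo 0 (Real.exp (l * t))) := by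
  have hrpow : IntegrableOn (fun u : ℝ => u ^ (-(w / l))) (Ioo 0 (Real.exp (l * t))) :=
    (intervalIntegrable_iff_integrableOn_Ioo_of_le (Real.exp_pos _).le).mp
      (intervalIntegral.intervalIntegrable_rpow'
        (by rw [neg_lt_neg_iff, div_lt_one hl]; exact hwl))
  refine (hrpow.const_mul (C * Real.exp (w * t))).mono'
    (aestronglyMeasurable_comp_log_div hg_cont l t _) ?_
  filter_upwards [ae_restrict_mem measurableSet_Ioo] with u hu
  exact norm_comp_log_div_le hg hl hu

variable [NormedSpace ℝ F]

lemma integral_pow_smul_comp_log_div_eq_laplaceTransform (g : ℝ → F) (hl : 0 < l) (t : ℝ)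
    (n : ℕ) :
    ∫ u in Ioo 0 (Real.exp (l * t)), u ^ n • g (t - Real.log u / l)
      = (l * Real.exp ((n + 1) * l * t)) • laplaceTransform g ((n + 1) * l) := by
  set ψ : ℝ → ℝ := fun s => Real.exp (l * (t - s)) with hψ_def
  have hψ : ∀ s, HasDerivAt ψ (-l * ψ s) s := fun s => by
    simpa [mul_comm] using (((hasDerivAt_id s).const_sub t).const_mul l).exp
  have himage : ψ '' Ioi 0 = Ioo 0 (Real.exp (l * t)) := by
    rw [hψ_def, ← Function.comp_def Real.exp, image_comp, ← Real.image_exp_Iio,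
      ← Function.comp_def (l * ·), image_comp, image_const_sub_Ioi, sub_zero,
      image_mul_left_Iio hl]
  have hinj : InjOn ψ (Ioi 0) := fun a _ b _ hab => by
    simpa [hl.ne'] using Real.exp_injective hab
  rw [← himage, integral_image_eq_integral_abs_deriv_smul measurableSet_Ioi
    (fun s _ => (hψ s).hasDerivWithinAt) hinj, laplaceTransform, ← integral_smul]
  refine setIntegral_congr_fun measurableSet_Ioi fun s _ => ?_
  have hlog : t - Real.log (ψ s) / l = s := by
    rw [hψ_def, Real.log_exp]; field_simp; ring
  rw [hlog, smul_smul, smul_smul, abs_mul, abs_neg, abs_of_pos hl, abs_of_pos (Real.exp_pos _),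
    hψ_def, ← Real.exp_nat_mul, mul_assoc, ← Real.exp_add, mul_assoc, ← Real.exp_add]
  ring_nf

lemma hasSum_integral_pow_div_factorial_smul {G : ℝ → F} {X : ℝ} (hG : IntegrableOn G (Ioo 0 X)) :
    HasSum (fun n : ℕ => ∫ u in Ioo 0 X, ((-u) ^ n / n !) • G u)
      (∫ u in Ioo 0 X, Real.exp (-u) • G u) := by
  have hle : ∀ n : ℕ, ∀ u ∈ Ioo 0 X, ‖((-u) ^ n / n !) • G u‖ ≤ X ^ n / n ! * ‖G u‖ :=
    fun n u hu => by
      rw [norm_smul, norm_div, norm_pow, norm_neg, Real.norm_of_nonneg hu.1.le,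
        RCLike.norm_natCast]
      have := hu.1.le
      gcongr
      exact hu.2.le
  have hint : ∀ n : ℕ, IntegrableOn (fun u : ℝ => ((-u) ^ n / n !) • G u) (Ioo 0 X) := fun n =>
    (hG.norm.const_mul _).mono'
      ((by fun_prop : Continuous fun u : ℝ => (-u) ^ n / n !).aestronglyMeasurable.smul
        hG.aestronglyMeasurable)
      ((ae_restrict_iff' measurableSet_Ioo).2 (Eventually.of_forall (hle n)))
  have hsum : Summable fun n : ℕ => ∫ u : ℝ in Ioo 0 X, ‖((-u) ^ n / n !) • G u‖ :=
    .of_nonneg_of_le (fun n => integral_nonneg fun _ => norm_nonneg _)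
      (fun n => (setIntegral_mono_on (hint n).norm (hG.norm.const_mul _) measurableSet_Ioo
        (hle n)).trans_eq (integral_const_mul _ _))
      ((Real.summable_pow_div_factorial X).mul_right _)
  convert hasSum_integral_of_summable_integral_norm hint hsum using 1
  refine setIntegral_congr_fun measurableSet_Ioo fun u _ => ?_
  rw [((NormedSpace.expSeries_div_hasSum_exp (-u)).smul_const (G u)).tsum_eq,
    Real.exp_eq_exp_ℝ]

lemma smul_tsum_phragmen_eq_integral (hg_cont : Continuous g)
    (hg : ∀ s, 0 ≤ s → ‖g s‖ ≤ C * Real.exp (w * s)) (hl : 0 < l) (hwl : w < l) (t : ℝ) :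
    l • ∑' n : ℕ, (-1 : ℝ) ^ n • (Real.exp (((n : ℝ) + 1) * l * t) / (n ! : ℝ)) •
        laplaceTransform g (((n : ℝ) + 1) * l)
      = ∫ u in Ioo 0 (Real.exp (l * t)), Real.exp (-u) • g (t - Real.log u / l) := by
  have hsum :=
    hasSum_integral_pow_div_factorial_smul (integrableOn_comp_log_div hg_cont hg hl hwl t)
  have hterm : ∀ n : ℕ, ∫ u in Ioo 0 (Real.exp (l * t)), ((-u) ^ n / n !) • g (t - Real.log u / l)
      = l • (-1 : ℝ) ^ n • (Real.exp (((n : ℝ) + 1) * l * t) / (n ! : ℝ)) •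
          laplaceTransform g (((n : ℝ) + 1) * l) := fun n => by
    have hsplit : (fun u : ℝ => ((-u) ^ n / n !) • g (t - Real.log u / l))
        = fun u => ((-1 : ℝ) ^ n / n !) • u ^ n • g (t - Real.log u / l) := funext fun u => by
      rw [smul_smul, neg_pow, mul_div_right_comm]
    rw [hsplit, integral_smul, integral_pow_smul_comp_log_div_eq_laplaceTransform g hl t n]
    simp only [smul_smul]
    congr 1
    ring
  simp only [hterm] at hsum
  rw [← tsum_const_smul'', hsum.tsum_eq]

variable [CompleteSpace F]

lemma tendsto_integral_exp_neg_smul_comp_log_div (hg_cont : Continuous g)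
    (hg : ∀ s, 0 ≤ s → ‖g s‖ ≤ C * Real.exp (w * s)) (ht : 0 < t) :
    Tendsto (fun l => ∫ u in Ioo 0 (Real.exp (l * t)), Real.exp (-u) • g (t - Real.log u / l))
      atTop (𝓝 (g t)) := by
  have hC : 0 ≤ C := by simpa using (norm_nonneg _).trans (hg 0 le_rfl)
  set K := C * Real.exp (w * t)
  have hindicator : ∀ l, ∫ u in Ioo 0 (Real.exp (l * t)), Real.exp (-u) • g (t - Real.log u / l)
      = ∫ u in Ioi 0, (Ioo 0 (Real.exp (l * t))).indicator
          (fun u => Real.exp (-u) • g (t - Real.log u / l)) u := fun l => by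
    rw [setIntegral_indicator measurableSet_Ioo, Ioi_inter_Ioo, max_self]
  have hlimit : ∫ u in Ioi 0, Real.exp (-u) • g t = g t := by
    rw [integral_smul_const, integral_exp_neg_Ioi_zero, one_smul]
  simp only [hindicator]
  rw [← hlimit]
  -- exponents written as `s - 1` to match `Real.GammaIntegral_convergent`
  refine tendsto_integral_filter_of_dominated_convergence
    (fun u => K * (Real.exp (-u) * u ^ ((1 / 2 : ℝ) - 1) + Real.exp (-u) * u ^ ((3 / 2 : ℝ) - 1)))
    ?_ ?_ ?_ ?_
  · exact Eventually.of_forall fun l => (((by fun_prop : Continuous fun u : ℝ =>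
      Real.exp (-u)).aestronglyMeasurable.smul
        (aestronglyMeasurable_comp_log_div hg_cont l t _)).indicator measurableSet_Ioo)
  · filter_upwards [eventually_gt_atTop 0, eventually_ge_atTop (2 * |w|)] with l hl hwl
    filter_upwards [ae_restrict_mem measurableSet_Ioi] with u hu
    by_cases hmem : u ∈ Ioo 0 (Real.exp (l * t))
    · rw [indicator_of_mem hmem, norm_smul, Real.norm_of_nonneg (Real.exp_pos _).le]
      have hrpow : u ^ (-(w / l)) ≤ u ^ ((1 / 2 : ℝ) - 1) + u ^ ((3 / 2 : ℝ) - 1) := by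
        have : |w / l| ≤ 1 / 2 := by
          rw [abs_div, abs_of_pos hl, div_le_iff₀ hl]; linarith
        obtain ⟨hlower, hupper⟩ := abs_le.1 this
        exact Real.rpow_le_rpow_add_rpow hu (by linarith) (by linarith)
      calc Real.exp (-u) * ‖g (t - Real.log u / l)‖
          ≤ Real.exp (-u) * (K * (u ^ ((1 / 2 : ℝ) - 1) + u ^ ((3 / 2 : ℝ) - 1))) := by
            gcongr
            exact (norm_comp_log_div_le hg hl hmem).trans (by gcongr)
        _ = _ := by ring
    · rw [indicator_of_notMem hmem, norm_zero]
      have := mem_Ioi.1 hu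
      positivity
  · exact ((Real.GammaIntegral_convergent (by norm_num)).add
      (Real.GammaIntegral_convergent (by norm_num))).const_mul K
  · filter_upwards [ae_restrict_mem measurableSet_Ioi] with u hu
    have hmem : ∀ᶠ l in atTop, u ∈ Ioo 0 (Real.exp (l * t)) := by
      filter_upwards [eventually_gt_atTop (Real.log u / t)] with l hl
      exact ⟨hu, by rwa [← Real.log_lt_iff_lt_exp hu, ← div_lt_iff₀ ht]⟩
    refine Tendsto.congr' (hmem.mono fun l hl => (indicator_of_mem hl _).symm) ?_
    refine Tendsto.const_smul (hg_cont.continuousAt.tendsto.comp ?_) _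
    simpa using (tendsto_const_nhds (x := t)).sub
      ((tendsto_const_nhds (x := Real.log u)).div_atTop tendsto_id)

theorem tendsto_phragmen_laplaceTransform (hg_cont : Continuous g)
    (hg : ∀ s, 0 ≤ s → ‖g s‖ ≤ C * Real.exp (w * s)) (ht : 0 < t) :
    Tendsto (fun l : ℝ => l • ∑' n : ℕ, (-1 : ℝ) ^ n •
        (Real.exp (((n : ℝ) + 1) * l * t) / (n ! : ℝ)) •
          laplaceTransform g (((n : ℝ) + 1) * l))
      atTop (𝓝 (g t)) := by
  refine (tendsto_integral_exp_neg_smul_comp_log_div hg_cont hg ht).congr' ?_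
  filter_upwards [eventually_gt_atTop 0, eventually_gt_atTop w] with l hl hwl
  exact (smul_tsum_phragmen_eq_integral hg_cont hg hl hwl t).symm

end Phragmen

theorem stmt_4_general {E : Type*} [NormedAddCommGroup E] [NormedSpace ℝ E] [CompleteSpace E]
    (A : E →L[ℝ] E) (C w : ℝ)
    (hbound : ∀ t : ℝ, 0 ≤ t → ‖exp (t • A)‖ ≤ C * Real.exp (w * t))
    (R : ℝ → E →L[ℝ] E)
    (hR : ∀ μ : ℝ, w < μ →
      (μ • (1 : E →L[ℝ] E) - A) * R μ = 1 ∧ R μ * (μ • (1 : E →L[ℝ] E) - A) = 1)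
    (t : ℝ) (ht : 0 < t) (f : E) :
    Tendsto (fun l : ℝ => l • ∑' n : ℕ, ((-1 : ℝ)) ^ n •
        (Real.exp (((n : ℝ) + 1) * l * t) / (Nat.factorial n : ℝ)) •
          R (((n : ℝ) + 1) * l) f)
      atTop (nhds ((exp (t • A)) f)) := by
  have hexp_cont : Continuous fun s : ℝ => exp (s • A) :=
    (differentiable_exp_smul_const ℝ A).continuous
  have hgrowth : ∀ s : ℝ, 0 ≤ s → ‖exp (s • A) f‖ ≤ C * ‖f‖ * Real.exp (w * s) := fun s hs =>
    calc ‖exp (s • A) f‖ ≤ ‖exp (s • A)‖ * ‖f‖ := (exp (s • A)).le_opNorm f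
      _ ≤ C * Real.exp (w * s) * ‖f‖ := by gcongr; exact hbound s hs
      _ = C * ‖f‖ * Real.exp (w * s) := by ring
  have hresolvent : ∀ μ, w < μ → R μ f = laplaceTransform (fun s => exp (s • A) f) μ :=
    fun μ hμ => by
      have hint : IntegrableOn (fun s : ℝ => Real.exp (-(μ * s)) • exp (s • A)) (Ioi 0) :=
        integrableOn_exp_neg_mul_smul hexp_cont hbound hμ
      rw [eq_laplaceTransform_exp_smul_of_mul_eq_one hbound hμ (hR μ hμ).2,
        laplaceTransform_apply hint]
  refine (tendsto_phragmen_laplaceTransform (hexp_cont.clm_apply continuous_const) hgrowth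
    ht).congr' ?_
  filter_upwards [eventually_gt_atTop 0, eventually_gt_atTop w] with l hl hwl
  refine congrArg (l • ·) (tsum_congr fun n => ?_)
  have hμ : w < ((n : ℝ) + 1) * l := by nlinarith [(n.cast_nonneg : (0 : ℝ) ≤ n)]
  rw [hresolvent _ hμ]

/-- Convergence of the Phragmén approximants to the semigroup: for `t > 0` and `f ∈ E`,
`λ ∑_{n≥1} (-1)^(n-1) (e^(nλt)/(n-1)!) R(nλ) f → exp (t • A) f` as `λ → ∞`. -/
theorem stmt_4 {E : Type*} [NormedAddCommGroup E] [NormedSpace ℝ E] [CompleteSpace E]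
    (A : E →L[ℝ] E) (C w : ℝ) (hC : 1 ≤ C) (hw : 0 ≤ w)
    (hbound : ∀ t : ℝ, 0 ≤ t → ‖exp (t • A)‖ ≤ C * Real.exp (w * t))
    (R : ℝ → E →L[ℝ] E)
    (hR : ∀ μ : ℝ, w < μ →
      (μ • (1 : E →L[ℝ] E) - A) * R μ = 1 ∧ R μ * (μ • (1 : E →L[ℝ] E) - A) = 1)
    (t : ℝ) (ht : 0 < t) (f : E) :
    Tendsto (fun l : ℝ => l • ∑' n : ℕ, ((-1 : ℝ)) ^ n •
        (Real.exp (((n : ℝ) + 1) * l * t) / (Nat.factorial n : ℝ)) •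
          R (((n : ℝ) + 1) * l) f)
      atTop (nhds ((exp (t • A)) f)) :=
  stmt_4_general A C w hbound R hR t ht f
end

section
/- Let Q : ℝ → Matrix (Fin m) (Fin m) ℝ be continuous and pairwise commuting, i.e. Q(s)·Q(u) = Q(u)·Q(s) for all s, u. Define P(t) := exp( ∫₀ᵗ Q(s) ds ). Then P(0) = I (the m×m identity matrix) and for every t, the function P has derivative P'(t) = P(t) · Q(t); that is, P solves the Kolmogorov forward equation ∂_t P(t) = P(t) Q(t), P(0) = I. -/
/-! The integrals `A τ = ∫₀^τ Q` commute with one another: multiplication by a fixed matrix is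
linear and continuous, so it passes under the integral, and the `Q s` commute pairwise. Hence
`exp (A τ) = exp (A t) * exp (A τ - A t)`, and since `exp` has derivative the identity at `0`
while `A' t = Q t` by the fundamental theorem of calculus, `d/dτ exp (A τ) = exp (A t) * Q t`
at `τ = t`. -/

attribute [local instance] Matrix.normedAddCommGroup Matrix.normedSpace

open MeasureTheory NormedSpace

theorem hasDerivAt_exp_of_commute {𝕂 𝔸 : Type*} [RCLike 𝕂] [NormedRing 𝔸] [NormedAlgebra 𝕂 𝔸]
    [CompleteSpace 𝔸] {A : 𝕂 → 𝔸} {A' : 𝔸} {t : 𝕂} (hA : HasDerivAt A A' t)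
    (hcomm : ∀ τ, Commute (A t) (A τ)) :
    HasDerivAt (fun τ => exp (A τ)) (exp (A t) * A') t := by
  let +nondep : NormedAlgebra ℚ 𝔸 := .restrictScalars ℚ 𝕂 𝔸
  have hsplit : (fun τ => exp (A τ)) = fun τ => exp (A t) * exp (A τ - A t) := funext fun τ => by
    rw [← exp_add_of_commute ((hcomm τ).sub_right (Commute.refl _)), add_sub_cancel]
  have hshift : HasDerivAt (fun τ => exp (A τ - A t)) A' t := by
    have hexp_zero := hasFDerivAt_exp_zero (𝕂 := 𝕂) (𝔸 := 𝔸)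
    rw [← sub_self (A t)] at hexp_zero
    exact hexp_zero.comp_hasDerivAt t (hA.sub_const _)
  rw [hsplit]
  exact hshift.const_mul (exp (A t))

/-- `HasDerivAt` only sees the topology of the matrices, so the submultiplicative operator norm
may be used to make them a Banach algebra. -/
theorem Matrix.hasDerivAt_exp_of_commute {ι 𝕂 : Type*} [Fintype ι] [DecidableEq ι] [RCLike 𝕂]
    {A : 𝕂 → Matrix ι ι 𝕂} {A' : Matrix ι ι 𝕂} {t : 𝕂} (hA : HasDerivAt A A' t)
    (hcomm : ∀ τ, Commute (A t) (A τ)) :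
    HasDerivAt (fun τ => exp (A τ)) (exp (A t) * A') t :=
  open scoped Matrix.Norms.Operator in _root_.hasDerivAt_exp_of_commute hA hcomm

theorem Matrix.commute_intervalIntegral {ι : Type*} [Fintype ι] {M : Matrix ι ι ℝ}
    {Q : ℝ → Matrix ι ι ℝ} (hQ : Continuous Q) (hcomm : ∀ s, Commute M (Q s)) (a b : ℝ) :
    Commute M (∫ s in a..b, Q s) := by
  have hint := hQ.intervalIntegrable (μ := volume) a b
  have hleft := (LinearMap.mulLeft ℝ M).toContinuousLinearMap.intervalIntegral_comp_comm hint
  have hright := (LinearMap.mulRight ℝ M).toContinuousLinearMap.intervalIntegral_comp_comm hint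
  calc M * ∫ s in a..b, Q s
      = ∫ s in a..b, M * Q s := hleft.symm
    _ = ∫ s in a..b, Q s * M := by simp_rw [(hcomm _).eq]
    _ = (∫ s in a..b, Q s) * M := hright

/-- Kolmogorov forward equation in the commuting case: if `Q : ℝ → Matrix (Fin m) (Fin m) ℝ`
is continuous and pairwise commuting, then `P(t) := exp (∫₀ᵗ Q(s) ds)` satisfies `P(0) = I`
and `P'(t) = P(t) Q(t)` for every `t`. -/
theorem stmt_10 {m : ℕ} (Q : ℝ → Matrix (Fin m) (Fin m) ℝ)
    (hcont : Continuous Q) (hcomm : ∀ s u, Q s * Q u = Q u * Q s) :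
    NormedSpace.exp (∫ s in (0 : ℝ)..(0 : ℝ), Q s) = (1 : Matrix (Fin m) (Fin m) ℝ) ∧
    ∀ t : ℝ,
      HasDerivAt (fun τ : ℝ => NormedSpace.exp (∫ s in (0 : ℝ)..τ, Q s))
        (NormedSpace.exp (∫ s in (0 : ℝ)..t, Q s) * Q t) t := by
  refine ⟨by rw [intervalIntegral.integral_same, exp_zero], fun t => ?_⟩
  have hQ_comm_integral : ∀ u, Commute (Q u) (∫ s in (0 : ℝ)..t, Q s) := fun u =>
    Matrix.commute_intervalIntegral hcont (hcomm u) 0 t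
  have hintegral_comm : ∀ τ, Commute (∫ s in (0 : ℝ)..t, Q s) (∫ s in (0 : ℝ)..τ, Q s) :=
    Matrix.commute_intervalIntegral hcont (fun u => (hQ_comm_integral u).symm) 0
  exact Matrix.hasDerivAt_exp_of_commute (hcont.integral_hasStrictDerivAt 0 t).hasDerivAt
    hintegral_comm
end

section
/- Let A : ℝ → Matrix (Fin m) (Fin m) ℝ be differentiable at θ₀ with derivative A'(θ₀), and let t > 0. Then the map θ ↦ exp( t·A(θ) ) is differentiable at θ₀ and its derivative equals the Bochner integral ∫₀ᵗ exp( (t−s)·A(θ₀) ) · A'(θ₀) · exp( s·A(θ₀) ) ds. -/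
/-!
Subtracting the two ends of `s ↦ exp ((t - s) • C) * exp (s • B)` gives
`exp (t • B) - exp (t • C) = ∫₀ᵗ exp ((t - s) • C) * (B - C) * exp (s • B) ds`.
With `B = A θ`, `C = A θ₀` this writes the difference quotient of `θ ↦ exp (t • A θ)` as
`Φ (slope A θ₀ θ, A θ)`, where `Φ (V, B) = ∫₀ᵗ exp ((t - s) • A θ₀) * V * exp (s • B) ds` is
continuous as a parametric integral of a jointly continuous integrand; so it tends to
`Φ (A', A θ₀)`.
-/

open NormedSpace Filter Topology

section BanachAlgebra

variable {𝔸 : Type*} [NormedRing 𝔸] [NormedAlgebra ℝ 𝔸] [CompleteSpace 𝔸]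

@[fun_prop]
theorem continuous_exp_of_normedAlgebra_real : Continuous (exp : 𝔸 → 𝔸) := by
  let +nondep : NormedAlgebra ℚ 𝔸 := .restrictScalars ℚ ℝ 𝔸
  exact exp_continuous

theorem hasDerivAt_exp_sub_smul_mul_exp_smul (B C : 𝔸) (t s : ℝ) :
    HasDerivAt (fun u : ℝ => exp ((t - u) • C) * exp (u • B))
      (exp ((t - s) • C) * (B - C) * exp (s • B)) s := by
  have hC : HasDerivAt (fun u : ℝ => exp ((t - u) • C)) (-(C * exp ((t - s) • C))) s := by
    simpa [Function.comp_def] using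
      (hasDerivAt_exp_smul_const' C (t - s)).scomp s ((hasDerivAt_id s).const_sub t)
  refine (hC.mul (hasDerivAt_exp_smul_const B s)).congr_deriv ?_
  rw [((Commute.refl C).smul_right (t - s)).exp_right.eq,
    ← ((Commute.refl B).smul_right s).exp_right.eq]
  noncomm_ring

theorem exp_smul_sub_exp_smul (B C : 𝔸) (t : ℝ) :
    exp (t • B) - exp (t • C) =
      ∫ s in (0 : ℝ)..t, exp ((t - s) • C) * (B - C) * exp (s • B) := by
  rw [intervalIntegral.integral_eq_sub_of_hasDerivAt
    (fun s _ => hasDerivAt_exp_sub_smul_mul_exp_smul B C t s)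
    (Continuous.intervalIntegrable (by fun_prop) _ _)]
  simp

theorem slope_exp_smul_comp (A : ℝ → 𝔸) (θ₀ t : ℝ) :
    slope (fun θ => exp (t • A θ)) θ₀ = fun θ =>
      ∫ s in (0 : ℝ)..t, exp ((t - s) • A θ₀) * slope A θ₀ θ * exp (s • A θ) := by
  funext θ
  simp only [slope_def_module, exp_smul_sub_exp_smul, ← intervalIntegral.integral_smul,
    mul_smul_comm, smul_mul_assoc]

theorem hasDerivAt_exp_smul_comp {A : ℝ → 𝔸} {A' : 𝔸} {θ₀ : ℝ} (hA : HasDerivAt A A' θ₀)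
    (t : ℝ) :
    HasDerivAt (fun θ => exp (t • A θ))
      (∫ s in (0 : ℝ)..t, exp ((t - s) • A θ₀) * A' * exp (s • A θ₀)) θ₀ := by
  have hΦ : Continuous fun p : 𝔸 × 𝔸 =>
      ∫ s in (0 : ℝ)..t, exp ((t - s) • A θ₀) * p.1 * exp (s • p.2) :=
    intervalIntegral.continuous_parametric_intervalIntegral_of_continuous' (by fun_prop) 0 t
  have hlim : Tendsto (fun θ => (slope A θ₀ θ, A θ)) (𝓝[≠] θ₀) (𝓝 (A', A θ₀)) :=
    (hasDerivAt_iff_tendsto_slope.mp hA).prodMk_nhds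
      (hA.continuousAt.tendsto.mono_left nhdsWithin_le_nhds)
  rw [hasDerivAt_iff_tendsto_slope, slope_exp_smul_comp]
  exact (hΦ.tendsto _).comp hlim

end BanachAlgebra

/- The operator norm makes `Matrix n n ℝ` a Banach algebra; it induces the same topology as the
sup norm, and Bochner integrals for the two norms agree entrywise. -/
section LinftyOpNorm

attribute [local instance] Matrix.linftyOpNormedAddCommGroup Matrix.linftyOpNormedRing
  Matrix.linftyOpNormedAlgebra

variable {n : Type*} [Fintype n] [DecidableEq n]

@[fun_prop]
theorem Matrix.continuous_exp : Continuous (exp : Matrix n n ℝ → Matrix n n ℝ) :=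
  continuous_exp_of_normedAlgebra_real

theorem Matrix.hasDerivAt_exp_smul_comp {A : ℝ → Matrix n n ℝ} {A' : Matrix n n ℝ} {θ₀ : ℝ}
    (hA : HasDerivAt A A' θ₀) (t : ℝ) :
    HasDerivAt (fun θ => exp (t • A θ))
      (Matrix.of fun i j =>
        ∫ s in (0 : ℝ)..t, (exp ((t - s) • A θ₀) * A' * exp (s • A θ₀)) i j) θ₀ := by
  refine (_root_.hasDerivAt_exp_smul_comp hA t).congr_deriv ?_
  ext i j
  exact ((Matrix.entryLinearMap ℝ ℝ i j).toContinuousLinearMap.intervalIntegral_comp_comm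
    (f := fun s => exp ((t - s) • A θ₀) * A' * exp (s • A θ₀))
    (Continuous.intervalIntegrable (by fun_prop) _ _)).symm

end LinftyOpNorm

attribute [local instance] Matrix.normedAddCommGroup Matrix.normedSpace

open MeasureTheory

theorem stmt_12_general {m : ℕ} (A : ℝ → Matrix (Fin m) (Fin m) ℝ)
    (A' : Matrix (Fin m) (Fin m) ℝ) (θ₀ : ℝ) (hA : HasDerivAt A A' θ₀)
    (t : ℝ) :
    HasDerivAt (fun θ : ℝ => NormedSpace.exp (t • A θ))
      (∫ s in (0 : ℝ)..t,
        NormedSpace.exp ((t - s) • A θ₀) * A' * NormedSpace.exp (s • A θ₀)) θ₀ := by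
  refine (Matrix.hasDerivAt_exp_smul_comp hA t).congr_deriv ?_
  ext i j
  exact (Matrix.entryLinearMap ℝ ℝ i j).toContinuousLinearMap.intervalIntegral_comp_comm
    (f := fun s => exp ((t - s) • A θ₀) * A' * exp (s • A θ₀))
    (Continuous.intervalIntegrable (by fun_prop) _ _)

/-- Duhamel's formula for the parameter derivative of the matrix exponential: if
`A : ℝ → Matrix (Fin m) (Fin m) ℝ` is differentiable at `θ₀` with derivative `A'` and
`t > 0`, then `θ ↦ exp (t • A θ)` is differentiable at `θ₀` with derivative
`∫₀ᵗ exp ((t-s) • A θ₀) A' exp (s • A θ₀) ds`. -/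
theorem stmt_12 {m : ℕ} (A : ℝ → Matrix (Fin m) (Fin m) ℝ)
    (A' : Matrix (Fin m) (Fin m) ℝ) (θ₀ : ℝ) (hA : HasDerivAt A A' θ₀)
    (t : ℝ) (ht : 0 < t) :
    HasDerivAt (fun θ : ℝ => NormedSpace.exp (t • A θ))
      (∫ s in (0 : ℝ)..t,
        NormedSpace.exp ((t - s) • A θ₀) * A' * NormedSpace.exp (s • A θ₀)) θ₀ :=
  stmt_12_general A A' θ₀ hA t
end
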